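/- Every prime ideal of C([0,1], ℝ) is contained in a unique maximal ideal. -/

import Mathlib

open Set Polynomial

abbrev I01 : Set ℝ := Set.Icc 0 1
abbrev R01 := C(I01, ℝ)

def evalHom (γ : I01) : R01 →+* ℝ where
  toFun f := f γ
  map_one' := rfl
  map_mul' _ _ := rfl
  map_zero' := rfl
  map_add' _ _ := rfl

/-!
The maximal ideals of `C(X, ℝ)`, for `X` compact Hausdorff, are the ideals `M_x` of functions
vanishing at a point `x`. If a prime `P` lay in `M_x` and `M_y` with `x ≠ y`, take `h` with
`h x > 0 > h y`: then `h⁺ * h⁻ = 0 ∈ P`, so `h⁺ ∈ P ⊆ M_x` or `h⁻ ∈ P ⊆ M_y`, yet `h⁺ x ≠ 0`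
and `h⁻ y ≠ 0`.
-/

namespace ContinuousMap

variable {X : Type*} [TopologicalSpace X]

lemma exists_mul_eq_zero_apply_ne_zero [T35Space X] {x y : X} (hxy : x ≠ y) :
    ∃ f g : C(X, ℝ), f * g = 0 ∧ f x ≠ 0 ∧ g y ≠ 0 := by
  obtain ⟨u, hu, hux, hu_one⟩ :=
    CompletelyRegularSpace.completely_regular x {y} isClosed_singleton hxy
  have huy : (u y : ℝ) = 1 := by simpa using congrArg Subtype.val (hu_one rfl)
  let h : C(X, ℝ) := ⟨fun z => 1 / 2 - u z, by fun_prop⟩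
  refine ⟨h ⊔ 0, -h ⊔ 0, ?_, ?_, ?_⟩
  · ext z
    simp only [mul_apply, sup_apply, neg_apply, zero_apply]
    rcases le_total (h z) 0 with hz | hz <;> simp [hz]
  · simp [h, hux]
  · norm_num [h, huy]

lemma eq_of_isPrime_le_idealOfSet [T35Space X] {P : Ideal C(X, ℝ)}
    (hP : P.IsPrime) {x y : X} (hx : P ≤ idealOfSet ℝ {x}ᶜ) (hy : P ≤ idealOfSet ℝ {y}ᶜ) :
    x = y := by
  by_contra hxy
  obtain ⟨f, g, hfg, hfx, hgy⟩ := exists_mul_eq_zero_apply_ne_zero hxy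
  rcases hP.mem_or_mem (hfg ▸ P.zero_mem) with hf | hg
  · exact hfx ((mem_idealOfSet_compl_singleton x f).mp (hx hf))
  · exact hgy ((mem_idealOfSet_compl_singleton y g).mp (hy hg))

theorem existsUnique_isMaximal_le_of_isPrime [CompactSpace X] [T2Space X] {P : Ideal C(X, ℝ)}
    (hP : P.IsPrime) : ∃! M : Ideal C(X, ℝ), M.IsMaximal ∧ P ≤ M := by
  obtain ⟨M, hM, hPM⟩ := P.exists_le_maximal hP.ne_top
  refine ⟨M, ⟨hM, hPM⟩, fun M' ⟨hM', hPM'⟩ => ?_⟩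
  obtain ⟨x, rfl⟩ := (ideal_isMaximal_iff M).mp hM
  obtain ⟨y, rfl⟩ := (ideal_isMaximal_iff M').mp hM'
  rw [eq_of_isPrime_le_idealOfSet hP hPM' hPM]

end ContinuousMap

theorem stmt10 (P : Ideal R01) (hP : P.IsPrime) :
    ∃! M : Ideal R01, M.IsMaximal ∧ P ≤ M :=
  ContinuousMap.existsUnique_isMaximal_le_of_isPrime hP
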